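/- In a finite connected graph G with m edges and a fixed vertex a, if the edges are listed in nondecreasing order of their distance from a as e_1, ..., e_m, then d_a(e_k) ≤ k − 1 for every k, and consequently Σ_{k=1}^m (2·d_a(e_k)+1) ≤ m^2, with equality only when G is a path with a as an endpoint. -/
import Mathlib

private lemma aux_nbr {V : Type*} (G : SimpleGraph V) (hconn : G.Connected) (a v : V) (d : ℕ)
    (hd : G.dist a v = d + 1) : ∃ u, G.Adj u v ∧ G.dist a u = d := by
  obtain ⟨p, hp⟩ := hconn.exists_walk_length_eq_dist a v
  have hnn : ¬ p.reverse.Nil := by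
    rw [SimpleGraph.Walk.not_nil_iff_lt_length, SimpleGraph.Walk.length_reverse, hp, hd]
    omega
  obtain ⟨u, h, q, hq⟩ := SimpleGraph.Walk.not_nil_iff.mp hnn
  refine ⟨u, h.symm, ?_⟩
  have hlen : q.length = d := by
    have := congrArg SimpleGraph.Walk.length hq
    rw [SimpleGraph.Walk.length_reverse, hp, hd, SimpleGraph.Walk.length_cons] at this
    omega
  have h1 : G.dist a u ≤ d := by
    have := SimpleGraph.dist_le q.reverse
    rwa [SimpleGraph.Walk.length_reverse, hlen] at this
  have h2 : d + 1 ≤ G.dist a u + 1 := by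
    calc d + 1 = G.dist a v := hd.symm
    _ ≤ G.dist a u + G.dist u v := hconn.dist_triangle
    _ ≤ G.dist a u + 1 := by
        have : G.dist u v = 1 := SimpleGraph.dist_eq_one_iff_adj.mpr h.symm
        omega
  omega

private lemma level_edge {V : Type*} (G : SimpleGraph V) (hconn : G.Connected) (a : V) :
    ∀ d (v : V), G.dist a v = d → ∀ i < d,
      ∃ u w : V, G.Adj u w ∧ G.dist a u = i ∧ G.dist a w = i + 1 := by
  intro d
  induction d with
  | zero => intro v _ i hi; omega
  | succ n ih =>
    intro v hv i hi
    obtain ⟨u, hadj, hu⟩ := aux_nbr G hconn a v n hv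
    rcases Nat.lt_succ_iff_lt_or_eq.mp hi with h | rfl
    · exact ih u hu i h
    · exact ⟨u, v, hadj, hu, hv⟩

private lemma sum_odd (n : ℕ) : ∑ i ∈ Finset.range n, (2 * i + 1) = n ^ 2 := by
  induction n with
  | zero => simp
  | succ n ih => rw [Finset.sum_range_succ, ih]; ring

theorem edge_distance_ordering {V : Type*} [Fintype V] [DecidableEq V]
    (G : SimpleGraph V) [DecidableRel G.Adj] (hconn : G.Connected)
    (a : V) (m : ℕ) (hm : m = G.edgeFinset.card)
    (dA : Sym2 V → ℕ) (hdA : ∀ u v : V, dA s(u, v) = min (G.dist u a) (G.dist v a))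
    (e : Fin m → Sym2 V) (he : ∀ k, e k ∈ G.edgeFinset)
    (einj : Function.Injective e)
    (hmono : ∀ j k : Fin m, j ≤ k → dA (e j) ≤ dA (e k)) :
    (∀ k : Fin m, dA (e k) ≤ (k : ℕ)) ∧
    (∑ k : Fin m, (2 * dA (e k) + 1)) ≤ m ^ 2 ∧
    ((∑ k : Fin m, (2 * dA (e k) + 1)) = m ^ 2 →
      ∃ φ : G ≃g SimpleGraph.pathGraph (m + 1), φ a = 0) := by
  classical
  have dc : ∀ x y : V, G.dist x y = G.dist y x := fun x y => SimpleGraph.dist_comm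
  -- surjectivity of e onto edgeFinset
  have himg : Finset.univ.image e = G.edgeFinset := by
    apply Finset.eq_of_subset_of_card_le
    · intro s hs
      obtain ⟨k, _, rfl⟩ := Finset.mem_image.mp hs
      exact he k
    · rw [Finset.card_image_of_injective _ einj, Finset.card_univ, Fintype.card_fin]
      omega
  have hsurj : ∀ s ∈ G.edgeFinset, ∃ k, e k = s := by
    intro s hs
    rw [← himg] at hs
    obtain ⟨k, _, hk⟩ := Finset.mem_image.mp hs
    exact ⟨k, hk⟩
  have memE : ∀ {x y : V}, G.Adj x y → s(x, y) ∈ G.edgeFinset := by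
    intro x y h
    rw [SimpleGraph.mem_edgeFinset]
    exact h
  have exrep : ∀ k : Fin m, ∃ x y, e k = s(x, y) := by
    intro k
    exact Sym2.ind (f := fun z => ∃ x y, z = s(x, y)) (fun x y => ⟨x, y, rfl⟩) (e k)
  -- Part 1
  have part1 : ∀ k : Fin m, dA (e k) ≤ (k : ℕ) := by
    intro k
    by_contra hlt
    push_neg at hlt
    obtain ⟨x, y, hxy⟩ := exrep k
    have hminxy : min (G.dist x a) (G.dist y a) = dA (e k) := by
      rw [← hdA, ← hxy]
    have hax : ∃ x', G.dist a x' = dA (e k) := by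
      rcases le_total (G.dist x a) (G.dist y a) with h | h
      · exact ⟨x, by rw [dc a x, ← hminxy, min_eq_left h]⟩
      · exact ⟨y, by rw [dc a y, ← hminxy, min_eq_right h]⟩
    obtain ⟨x', hx'⟩ := hax
    have key : ∀ i, i < dA (e k) → ∃ j : Fin m, dA (e j) = i ∧ (j : ℕ) < (k : ℕ) := by
      intro i hi
      obtain ⟨u, w, hadj, hu, hw⟩ := level_edge G hconn a _ x' hx' i hi
      obtain ⟨j, hj⟩ := hsurj _ (memE hadj)
      have hdj : dA (e j) = i := by
        rw [hj, hdA, ← dc a u, ← dc a w, hu, hw]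
        exact min_eq_left (by omega)
      refine ⟨j, hdj, ?_⟩
      by_contra hge
      push_neg at hge
      have := hmono k j (Fin.le_def.mpr hge)
      omega
    choose jf hjf1 hjf2 using key
    have hinjF : Function.Injective
        (fun i : Fin (dA (e k)) => (⟨(jf i i.2 : ℕ), hjf2 i i.2⟩ : Fin (k : ℕ))) := by
      intro i1 i2 h12
      have hv : ((jf i1 i1.2 : Fin m) : ℕ) = ((jf i2 i2.2 : Fin m) : ℕ) := by
        simpa using congrArg Fin.val h12
      have hv2 : (jf i1 i1.2 : Fin m) = jf i2 i2.2 := Fin.val_injective hv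
      have hd12 := congrArg dA (congrArg e hv2)
      rw [hjf1 i1 i1.2, hjf1 i2 i2.2] at hd12
      exact Fin.val_injective hd12
    have := Fintype.card_le_of_injective _ hinjF
    simp only [Fintype.card_fin] at this
    omega
  have hsum : (∑ k : Fin m, (2 * (k : ℕ) + 1)) = m ^ 2 := by
    rw [Fin.sum_univ_eq_sum_range (fun i => 2 * i + 1) m]
    exact sum_odd m
  have hle : (∑ k : Fin m, (2 * dA (e k) + 1)) ≤ ∑ k : Fin m, (2 * (k : ℕ) + 1) :=
    Finset.sum_le_sum (fun k _ => by have := part1 k; omega)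
  refine ⟨part1, le_trans hle (le_of_eq hsum), ?_⟩
  -- Part 3
  intro heq
  have hdk : ∀ k : Fin m, dA (e k) = (k : ℕ) := by
    by_contra hne
    push_neg at hne
    obtain ⟨k0, hk0⟩ := hne
    have hlt : (∑ k : Fin m, (2 * dA (e k) + 1)) < ∑ k : Fin m, (2 * (k : ℕ) + 1) := by
      apply Finset.sum_lt_sum
      · intro k _
        have := part1 k
        omega
      · refine ⟨k0, Finset.mem_univ _, ?_⟩
        have := part1 k0
        omega
    rw [heq, hsum] at hlt
    omega
  -- dist from a is injective
  have hinj' : ∀ d (u v : V), G.dist a u = d → G.dist a v = d → u = v := by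
    intro d
    induction d with
    | zero =>
      intro u v hu hv
      rw [hconn.dist_eq_zero_iff] at hu hv
      rw [← hu, ← hv]
    | succ n ih =>
      intro u v hu hv
      obtain ⟨u', hau, hu'⟩ := aux_nbr G hconn a u n hu
      obtain ⟨v', hav, hv'⟩ := aux_nbr G hconn a v n hv
      obtain ⟨j1, hj1⟩ := hsurj _ (memE hau)
      obtain ⟨j2, hj2⟩ := hsurj _ (memE hav)
      have hd1 : dA (e j1) = n := by
        rw [hj1, hdA, ← dc a u', ← dc a u, hu', hu]
        exact min_eq_left (by omega)
      have hd2 : dA (e j2) = n := by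
        rw [hj2, hdA, ← dc a v', ← dc a v, hv', hv]
        exact min_eq_left (by omega)
      have hj12 : j1 = j2 := by
        apply Fin.val_injective
        rw [← hdk j1, ← hdk j2, hd1, hd2]
      have hsym : s(u', u) = s(v', v) := by rw [← hj1, ← hj2, hj12]
      rcases Sym2.eq_iff.mp hsym with ⟨_, h2⟩ | ⟨h1, h2⟩
      · exact h2
      · rw [h1] at hu'
        omega
  -- distance upper bound
  have hub : ∀ v : V, G.dist a v ≤ m := by
    intro v
    by_contra h
    push_neg at h
    obtain ⟨u, hadj, hu⟩ := aux_nbr G hconn a v (G.dist a v - 1) (by omega)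
    obtain ⟨j, hj⟩ := hsurj _ (memE hadj)
    have hdj : dA (e j) = G.dist a v - 1 := by
      rw [hj, hdA, ← dc a u, ← dc a v, hu]
      exact min_eq_left (by omega)
    have := hdk j
    have := j.2
    omega
  -- top distance attained
  have htop : ∃ v, G.dist a v = m := by
    rcases Nat.eq_zero_or_pos m with rfl | hm0
    · exact ⟨a, SimpleGraph.dist_self⟩
    · have hk : (⟨m - 1, by omega⟩ : Fin m) = ⟨m - 1, by omega⟩ := rfl
      obtain ⟨x, y, hxy⟩ := exrep ⟨m - 1, by omega⟩
      have hadj : G.Adj x y := by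
        have := he ⟨m - 1, by omega⟩
        rw [hxy, SimpleGraph.mem_edgeFinset, SimpleGraph.mem_edgeSet] at this
        exact this
      have hmin : min (G.dist a x) (G.dist a y) = m - 1 := by
        rw [dc a x, dc a y, ← hdA, ← hxy, hdk]
      have hxle := hub x
      have hyle := hub y
      have htri1 : G.dist a y ≤ G.dist a x + 1 := by
        have h1 : G.dist a y ≤ G.dist a x + G.dist x y := hconn.dist_triangle
        have h2 : G.dist x y = 1 := SimpleGraph.dist_eq_one_iff_adj.mpr hadj
        omega
      have htri2 : G.dist a x ≤ G.dist a y + 1 := by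
        have h1 : G.dist a x ≤ G.dist a y + G.dist y x := hconn.dist_triangle
        have h2 : G.dist y x = 1 := SimpleGraph.dist_eq_one_iff_adj.mpr hadj.symm
        omega
      have hne : G.dist a x ≠ G.dist a y := fun hh => hadj.ne (hinj' _ x y rfl hh.symm)
      rcases le_total (G.dist a x) (G.dist a y) with h | h
      · rw [min_eq_left h] at hmin
        exact ⟨y, by omega⟩
      · rw [min_eq_right h] at hmin
        exact ⟨x, by omega⟩
  have hatt : ∀ i : ℕ, i ≤ m → ∃ v, G.dist a v = i := by
    intro i hi
    obtain ⟨vm, hvm⟩ := htop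
    rcases eq_or_lt_of_le hi with rfl | hlt
    · exact ⟨vm, hvm⟩
    · obtain ⟨u, w, _, hu, _⟩ := level_edge G hconn a m vm hvm i hlt
      exact ⟨u, hu⟩
  -- build the isomorphism
  let f : V → Fin (m + 1) := fun v => ⟨G.dist a v, by have := hub v; omega⟩
  have hbij : Function.Bijective f := by
    constructor
    · intro u v huv
      exact hinj' (G.dist a u) u v rfl (congrArg Fin.val huv).symm
    · intro i
      obtain ⟨v, hv⟩ := hatt (i : ℕ) (by omega)
      exact ⟨v, Fin.ext hv⟩
  refine ⟨⟨Equiv.ofBijective f hbij, @fun u v => ?_⟩, ?_⟩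
  · rw [SimpleGraph.pathGraph_adj]
    show G.dist a u + 1 = G.dist a v ∨ G.dist a v + 1 = G.dist a u ↔ G.Adj u v
    constructor
    · rintro (h | h)
      · obtain ⟨w, hw, hwd⟩ := aux_nbr G hconn a v (G.dist a u) h.symm
        have : w = u := hinj' _ w u hwd rfl
        rw [← this]
        exact hw
      · obtain ⟨w, hw, hwd⟩ := aux_nbr G hconn a u (G.dist a v) h.symm
        have : w = v := hinj' _ w v hwd rfl
        rw [← this]
        exact hw.symm
    · intro h
      have h1 : G.dist a v ≤ G.dist a u + 1 := by
        have h1 : G.dist a v ≤ G.dist a u + G.dist u v := hconn.dist_triangle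
        have h2 : G.dist u v = 1 := SimpleGraph.dist_eq_one_iff_adj.mpr h
        omega
      have h2 : G.dist a u ≤ G.dist a v + 1 := by
        have h1 : G.dist a u ≤ G.dist a v + G.dist v u := hconn.dist_triangle
        have h2 : G.dist v u = 1 := SimpleGraph.dist_eq_one_iff_adj.mpr h.symm
        omega
      have h3 : G.dist a u ≠ G.dist a v := fun hh => h.ne (hinj' _ u v rfl hh.symm)
      omega
  · apply Fin.ext
    show G.dist a a = 0
    exact SimpleGraph.dist_self
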